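/- arXiv:1301.5254 — 5 statements merged into one kernel-verified Lean document; each statement's English description precedes it below -/
import Mathlib

section
/- (Expander Mixing Lemma for edge-weighted graphs) Let G = (V, W) be an edge-weighted graph with symmetric nonnegative weight matrix W, generalized degrees d_i = ∑_j w_{ij} all positive, and total volume Vol(V) = ∑_i d_i = 1. Then for all subsets X, Y ⊆ V: |w(X,Y) − Vol(X)·Vol(Y)| ≤ ‖M_D‖ · sqrt(Vol(X)·Vol(Y)), where M_D = D^{-1/2} W D^{-1/2} − √d √dᵀ is the normalized modularity matrix and ‖M_D‖ is its spectral norm. -/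
open Matrix BigOperators

/-- Spectral norm of a square real matrix as sup of |xᵀAy| over unit vectors. -/
noncomputable def specNorm {n : ℕ} (A : Matrix (Fin n) (Fin n) ℝ) : ℝ :=
  sSup {t | ∃ (x y : Fin n → ℝ),
    Real.sqrt (∑ i, x i ^ 2) = 1 ∧ Real.sqrt (∑ j, y j ^ 2) = 1 ∧
    t = |x ⬝ᵥ A.mulVec y|}

/-!
Test the bilinear form of `M_D` on `u = 𝟙_X √d` and `v = 𝟙_Y √d`. Since
`√d_i (M_D)_{ij} √d_j = w_{ij} - d_i d_j`, one gets `uᵀ M_D v = w(X,Y) - Vol(X) Vol(Y)`, while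
`‖u‖² = Vol(X)` and `‖v‖² = Vol(Y)`; the claim is then `|uᵀ A v| ≤ ‖A‖ ‖u‖ ‖v‖`, the homogeneous
form of the definition of the spectral norm.
-/

lemma abs_le_one_of_sum_sq_eq_one {ι : Type*} [Fintype ι] {x : ι → ℝ}
    (hx : ∑ i, x i ^ 2 = 1) (i : ι) : |x i| ≤ 1 :=
  abs_le_of_sq_le_sq (by
    rw [one_pow, ← hx]
    exact Finset.single_le_sum (fun j _ => sq_nonneg (x j)) (Finset.mem_univ i)) zero_le_one

lemma abs_dotProduct_mulVec_le_sum_abs {ι : Type*} [Fintype ι] (A : Matrix ι ι ℝ)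
    {x y : ι → ℝ} (hx : ∀ i, |x i| ≤ 1) (hy : ∀ j, |y j| ≤ 1) :
    |x ⬝ᵥ A *ᵥ y| ≤ ∑ i, ∑ j, |A i j| := by
  simp only [dotProduct, mulVec, Finset.mul_sum]
  refine (Finset.abs_sum_le_sum_abs _ _).trans <| Finset.sum_le_sum fun i _ =>
    (Finset.abs_sum_le_sum_abs _ _).trans <| Finset.sum_le_sum fun j _ => ?_
  rw [abs_mul, abs_mul]
  calc |x i| * (|A i j| * |y j|) ≤ 1 * (|A i j| * 1) := by gcongr <;> simp [hx, hy]
    _ = |A i j| := by ring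

lemma bddAbove_specNorm_set {n : ℕ} (A : Matrix (Fin n) (Fin n) ℝ) :
    BddAbove {t | ∃ (x y : Fin n → ℝ),
      Real.sqrt (∑ i, x i ^ 2) = 1 ∧ Real.sqrt (∑ j, y j ^ 2) = 1 ∧
      t = |x ⬝ᵥ A.mulVec y|} := by
  refine ⟨∑ i, ∑ j, |A i j|, ?_⟩
  rintro t ⟨x, y, hx, hy, rfl⟩
  rw [Real.sqrt_eq_one] at hx hy
  exact abs_dotProduct_mulVec_le_sum_abs A (abs_le_one_of_sum_sq_eq_one hx)
    (abs_le_one_of_sum_sq_eq_one hy)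

lemma abs_dotProduct_mulVec_le_specNorm {n : ℕ} (A : Matrix (Fin n) (Fin n) ℝ)
    {x y : Fin n → ℝ} (hx : ∑ i, x i ^ 2 = 1) (hy : ∑ j, y j ^ 2 = 1) :
    |x ⬝ᵥ A *ᵥ y| ≤ specNorm A :=
  le_csSup (bddAbove_specNorm_set A) ⟨x, y, by simp [hx], by simp [hy], rfl⟩

lemma eq_zero_of_sqrt_sum_sq_eq_zero {ι : Type*} [Fintype ι] {x : ι → ℝ}
    (hx : √(∑ i, x i ^ 2) = 0) : x = 0 := by
  rw [Real.sqrt_eq_zero (by positivity)] at hx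
  exact dotProduct_self_eq_zero.mp (by simpa [dotProduct, sq] using hx)

lemma sum_sq_inv_sqrt_smul {ι : Type*} [Fintype ι] {x : ι → ℝ} (hx : x ≠ 0) :
    ∑ i, ((√(∑ j, x j ^ 2))⁻¹ • x) i ^ 2 = 1 := by
  have : ∑ i, x i ^ 2 ≠ 0 := fun h => hx (eq_zero_of_sqrt_sum_sq_eq_zero (by simp [h]))
  simp only [Pi.smul_apply, smul_eq_mul, mul_pow, ← Finset.mul_sum, inv_pow,
    Real.sq_sqrt (by positivity : (0 : ℝ) ≤ ∑ i, x i ^ 2), inv_mul_cancel₀ this]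

lemma abs_dotProduct_mulVec_le_specNorm_mul {n : ℕ} (A : Matrix (Fin n) (Fin n) ℝ)
    (x y : Fin n → ℝ) :
    |x ⬝ᵥ A *ᵥ y| ≤ specNorm A * (√(∑ i, x i ^ 2) * √(∑ j, y j ^ 2)) := by
  rcases eq_or_ne x 0 with rfl | hx
  · simp
  rcases eq_or_ne y 0 with rfl | hy
  · simp
  have ha : 0 < √(∑ i, x i ^ 2) :=
    (Real.sqrt_nonneg _).lt_of_ne' (mt eq_zero_of_sqrt_sum_sq_eq_zero hx)
  have hb : 0 < √(∑ j, y j ^ 2) :=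
    (Real.sqrt_nonneg _).lt_of_ne' (mt eq_zero_of_sqrt_sum_sq_eq_zero hy)
  have := abs_dotProduct_mulVec_le_specNorm A (sum_sq_inv_sqrt_smul hx) (sum_sq_inv_sqrt_smul hy)
  rw [smul_dotProduct, mulVec_smul, dotProduct_smul, smul_eq_mul, smul_eq_mul, abs_mul,
    abs_mul, abs_inv, abs_inv, abs_of_pos ha, abs_of_pos hb, inv_mul_le_iff₀ ha,
    inv_mul_le_iff₀ hb] at this
  linarith

lemma dotProduct_mulVec_ite_mem {ι : Type*} [Fintype ι] [DecidableEq ι] (A : Matrix ι ι ℝ)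
    (X Y : Finset ι) (f g : ι → ℝ) :
    (fun i => if i ∈ X then f i else 0) ⬝ᵥ A *ᵥ (fun j => if j ∈ Y then g j else 0) =
      ∑ i ∈ X, ∑ j ∈ Y, f i * A i j * g j := by
  simp only [dotProduct, mulVec, mul_ite, mul_zero, Finset.sum_ite_mem, Finset.univ_inter,
    Finset.mul_sum, ite_mul, zero_mul, Finset.sum_ite_irrel, Finset.sum_const_zero, mul_assoc]

lemma sum_sq_ite_mem_sqrt {ι : Type*} [Fintype ι] [DecidableEq ι] (X : Finset ι)
    {d : ι → ℝ} (hd : ∀ i, 0 ≤ d i) :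
    ∑ i, (if i ∈ X then √(d i) else 0) ^ 2 = ∑ i ∈ X, d i := by
  simp only [ite_pow, Real.sq_sqrt (hd _), ne_eq, OfNat.ofNat_ne_zero, not_false_eq_true,
    zero_pow, Finset.sum_ite_mem, Finset.univ_inter]

theorem expander_mixing_weighted_general {n : ℕ} (W : Matrix (Fin n) (Fin n) ℝ)
    (d : Fin n → ℝ)
    (hdpos : ∀ i, 0 < d i)
    (MD : Matrix (Fin n) (Fin n) ℝ)
    (hMD : MD = fun i j => W i j / (Real.sqrt (d i) * Real.sqrt (d j))
                  - Real.sqrt (d i) * Real.sqrt (d j)) :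
    ∀ X Y : Finset (Fin n),
      |(∑ i ∈ X, ∑ j ∈ Y, W i j) - (∑ i ∈ X, d i) * (∑ j ∈ Y, d j)| ≤
        specNorm MD * Real.sqrt ((∑ i ∈ X, d i) * (∑ j ∈ Y, d j)) := by
  intro X Y
  have hentry : ∀ i j, √(d i) * MD i j * √(d j) = W i j - d i * d j := by
    intro i j
    have hi : √(d i) ≠ 0 := (Real.sqrt_pos.mpr (hdpos i)).ne'
    have hj : √(d j) ≠ 0 := (Real.sqrt_pos.mpr (hdpos j)).ne'
    rw [hMD]
    field_simp
    simp only [Real.sq_sqrt (hdpos _).le]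
  have key := abs_dotProduct_mulVec_le_specNorm_mul MD
    (fun i => if i ∈ X then √(d i) else 0) (fun j => if j ∈ Y then √(d j) else 0)
  have hd : ∀ i, 0 ≤ d i := fun i => (hdpos i).le
  rw [dotProduct_mulVec_ite_mem, sum_sq_ite_mem_sqrt X hd, sum_sq_ite_mem_sqrt Y hd,
    ← Real.sqrt_mul (Finset.sum_nonneg fun i _ => hd i)] at key
  simpa only [Finset.sum_mul_sum, ge_iff_le, hentry, Finset.sum_sub_distrib] using key

/-- Expander Mixing Lemma for edge-weighted graphs. -/
theorem expander_mixing_weighted {n : ℕ} (W : Matrix (Fin n) (Fin n) ℝ)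
    (hsym : W.IsSymm) (hnn : ∀ i j, 0 ≤ W i j)
    (d : Fin n → ℝ) (hd : ∀ i, d i = ∑ j, W i j)
    (hdpos : ∀ i, 0 < d i) (hvol : ∑ i, d i = 1)
    (MD : Matrix (Fin n) (Fin n) ℝ)
    (hMD : MD = fun i j => W i j / (Real.sqrt (d i) * Real.sqrt (d j))
                  - Real.sqrt (d i) * Real.sqrt (d j)) :
    ∀ X Y : Finset (Fin n),
      |(∑ i ∈ X, ∑ j ∈ Y, W i j) - (∑ i ∈ X, d i) * (∑ j ∈ Y, d j)| ≤
        specNorm MD * Real.sqrt ((∑ i ∈ X, d i) * (∑ j ∈ Y, d j)) :=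
  expander_mixing_weighted_general W d hdpos MD hMD
end

section
/- If the edge-weighted graph G = (V, W) is connected (W irreducible), then 1 is not an eigenvalue of the normalized modularity matrix M_D = D^{-1/2} W D^{-1/2} − √d √dᵀ. -/
open Matrix BigOperators

/-- If the weighted graph is connected, 1 is not an eigenvalue of M_D. -/
theorem one_not_eigenvalue_of_modularity {n : ℕ} (W : Matrix (Fin n) (Fin n) ℝ)
    (hsym : W.IsSymm) (hnn : ∀ i j, 0 ≤ W i j)
    (d : Fin n → ℝ) (hd : ∀ i, d i = ∑ j, W i j)
    (hdpos : ∀ i, 0 < d i) (hvol : ∑ i, d i = 1)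
    (hirr : ∀ S : Finset (Fin n), S.Nonempty → S ≠ Finset.univ →
      ∃ i ∈ S, ∃ j ∈ Sᶜ, W i j ≠ 0)
    (MD : Matrix (Fin n) (Fin n) ℝ)
    (hMD : MD = (Matrix.of fun i j => W i j / (Real.sqrt (d i) * Real.sqrt (d j)))
      - vecMulVec (fun i => Real.sqrt (d i)) (fun i => Real.sqrt (d i))) :
    ¬ ∃ x : Fin n → ℝ, x ≠ 0 ∧ MD.mulVec x = x := by
  rintro ⟨x, hx, hmul⟩
  rcases Nat.eq_zero_or_pos n with h0 | hn
  · subst h0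
    exact hx (funext fun i => absurd i.2 (by omega))
  haveI : Nonempty (Fin n) := ⟨⟨0, hn⟩⟩
  have hsq : ∀ i, 0 < Real.sqrt (d i) := fun i => Real.sqrt_pos.2 (hdpos i)
  set u : Fin n → ℝ := fun i => x i / Real.sqrt (d i) with hu
  have hxu : ∀ i, x i = Real.sqrt (d i) * u i := fun i => by
    rw [hu]; show x i = Real.sqrt (d i) * (x i / Real.sqrt (d i)); rw [mul_div_assoc'] at *; exact (mul_div_cancel_left₀ (x i) (hsq i).ne').symm
  have hsqd : ∀ i, Real.sqrt (d i) * Real.sqrt (d i) = d i :=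
    fun i => Real.mul_self_sqrt (hdpos i).le
  set s : ℝ := ∑ j, d j * u j with hs
  have key : ∀ i, ∑ j, W i j * u j = d i * (u i + s) := by
    intro i
    have h1 := congrFun hmul i
    rw [hMD] at h1
    simp only [Matrix.mulVec, dotProduct, Matrix.sub_apply, Matrix.of_apply,
      vecMulVec_apply, sub_mul, Finset.sum_sub_distrib] at h1
    have hA : ∑ j, W i j * u j
        = Real.sqrt (d i) * ∑ j, W i j / (Real.sqrt (d i) * Real.sqrt (d j)) * x j := by
      rw [Finset.mul_sum]
      refine Finset.sum_congr rfl fun j _ => ?_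
      rw [hxu j]
      field_simp [(hsq i).ne', (hsq j).ne']
    have hB : ∑ j, Real.sqrt (d i) * Real.sqrt (d j) * x j = Real.sqrt (d i) * s := by
      rw [hs, Finset.mul_sum]
      refine Finset.sum_congr rfl fun j _ => ?_
      rw [hxu j]
      rw [show Real.sqrt (d i) * Real.sqrt (d j) * (Real.sqrt (d j) * u j)
          = Real.sqrt (d i) * ((Real.sqrt (d j) * Real.sqrt (d j)) * u j) by ring, hsqd j]
    have h2 : ∑ j, W i j / (Real.sqrt (d i) * Real.sqrt (d j)) * x j
        = x i + Real.sqrt (d i) * s := by rw [← hB]; linarith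
    rw [hA, h2, hxu i]
    rw [show Real.sqrt (d i) * (Real.sqrt (d i) * u i + Real.sqrt (d i) * s)
        = (Real.sqrt (d i) * Real.sqrt (d i)) * (u i + s) by ring, hsqd i]
  -- column sums equal d
  have hcol : ∀ j, ∑ i, W i j = d j := by
    intro j
    rw [hd j]
    exact Finset.sum_congr rfl fun i _ => hsym.apply j i
  -- s = 0
  have hs0 : s = 0 := by
    have hsum : ∑ i, ∑ j, W i j * u j = ∑ i, d i * (u i + s) :=
      Finset.sum_congr rfl fun i _ => key i
    rw [Finset.sum_comm] at hsum
    have hL : ∑ j, ∑ i, W i j * u j = s := by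
      rw [hs]
      refine Finset.sum_congr rfl fun j _ => ?_
      rw [← Finset.sum_mul, hcol j]
    have hR : ∑ i, d i * (u i + s) = s + s := by
      have : ∑ i, d i * (u i + s) = (∑ i, d i * u i) + (∑ i, d i) * s := by
        rw [Finset.sum_mul, ← Finset.sum_add_distrib]
        exact Finset.sum_congr rfl fun i _ => by ring
      rw [this, hvol, ← hs]; ring
    rw [hL, hR] at hsum
    linarith
  have key' : ∀ i, ∑ j, W i j * u j = d i * u i := by
    intro i; rw [key i, hs0]; ring
  -- maximum principle
  obtain ⟨i0, -, hmax⟩ := Finset.exists_max_image Finset.univ u ⟨Classical.arbitrary _, Finset.mem_univ _⟩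
  set M := u i0 with hM
  set S : Finset (Fin n) := Finset.univ.filter (fun i => u i = M) with hS
  have hi0S : i0 ∈ S := Finset.mem_filter.2 ⟨Finset.mem_univ _, rfl⟩
  have hSuniv : S = Finset.univ := by
    by_contra hne
    obtain ⟨i, hiS, j, hjS, hWij⟩ := hirr S ⟨i0, hi0S⟩ hne
    have huiM : u i = M := (Finset.mem_filter.1 hiS).2
    have hujM : u j < M := by
      have hne' : u j ≠ M := fun h =>
        (Finset.mem_compl.1 hjS) (Finset.mem_filter.2 ⟨Finset.mem_univ _, h⟩)
      exact lt_of_le_of_ne (hmax j (Finset.mem_univ _)) hne'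
    have hlt : ∑ k, W i k * u k < ∑ k, W i k * M := by
      refine Finset.sum_lt_sum (fun k _ => mul_le_mul_of_nonneg_left (hmax k (Finset.mem_univ _)) (hnn i k)) ⟨j, Finset.mem_univ _, ?_⟩
      exact mul_lt_mul_of_pos_left hujM (lt_of_le_of_ne (hnn i j) (Ne.symm hWij))
    rw [key' i, huiM, ← Finset.sum_mul, ← hd i] at hlt
    exact lt_irrefl _ hlt
  have hall : ∀ i, u i = M := by
    intro i
    have hiS : i ∈ S := by rw [hSuniv]; exact Finset.mem_univ i
    exact (Finset.mem_filter.1 hiS).2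
  have hM0 : M = 0 := by
    have : s = M := by
      rw [hs]
      calc ∑ j, d j * u j = ∑ j, d j * M := Finset.sum_congr rfl fun j _ => by rw [hall j]
        _ = (∑ j, d j) * M := by rw [Finset.sum_mul]
        _ = M := by rw [hvol, one_mul]
    rw [← this, hs0]
  exact hx (funext fun i => by rw [hxu i, hall i, hM0, mul_zero]; rfl)
end

section
/- For a k-partition P_k of the vertices of an edge-weighted graph with Vol(V)=1, the normalized Newman–Girvan modularity satisfies M_k(P_k) = k − 1 − Q_k(P_k), where Q_k(P_k) is the normalized k-way cut tr((D^{1/2} X̃(P_k))ᵀ (I − D^{-1/2} W D^{-1/2}) (D^{1/2} X̃(P_k))) with X̃(P_k) the matrix of normalized partition vectors. -/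
/-!
Writing `Vol a` for the volume of the block `V_a` and `w_a` for `∑_{i,j ∈ V_a} W i j`, conjugating
by `D^{1/2}` turns `Q` into `tr (X̃ᵀ (D - W) X̃) = ∑_a (Vol a - w_a) / Vol a = k - ∑_a w_a / Vol a`,
while `M = ∑_a (w_a - Vol a ^ 2) / Vol a = ∑_a w_a / Vol a - 1` because the volumes sum to `1`.
-/

open Matrix BigOperators

namespace Matrix

variable {ι κ R : Type*}

theorem diagonal_sqrt_mul_one_sub_mul_diagonal_sqrt [Fintype ι] [DecidableEq ι] {d : ι → ℝ}
    (hd : ∀ i, 0 < d i) (W : Matrix ι ι ℝ) :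
    diagonal (fun i => √(d i)) * (1 - of fun i j => W i j / (√(d i) * √(d j))) *
      diagonal (fun i => √(d i)) = diagonal d - W := by
  ext i j
  have hi := (Real.sqrt_pos.2 (hd i)).ne'
  have hj := (Real.sqrt_pos.2 (hd j)).ne'
  rw [mul_diagonal, diagonal_mul, sub_apply, sub_apply, of_apply]
  rcases eq_or_ne i j with rfl | hij
  · simp only [one_apply_eq, diagonal_apply_eq]
    field_simp
    rw [Real.sq_sqrt (hd i).le]
  · simp only [one_apply_ne hij, diagonal_apply_ne _ hij, zero_sub, mul_neg, neg_mul]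
    field_simp

theorem sum_sum_diagonal [DecidableEq ι] [AddCommMonoid R] (d : ι → R) (s : Finset ι) :
    ∑ i ∈ s, ∑ j ∈ s, diagonal d i j = ∑ i ∈ s, d i :=
  Finset.sum_congr rfl fun i hi => by simp [diagonal_apply, hi]

theorem trace_transpose_mul_mul_of_fiber [Fintype ι] [Fintype κ] [DecidableEq κ]
    [CommSemiring R] (A : Matrix ι ι R) (P : ι → κ) (c : κ → R) (X : Matrix ι κ R)
    (hX : ∀ j a, X j a = if P j = a then c a else 0) :
    trace (Xᵀ * A * X) = ∑ a, c a ^ 2 *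
      ∑ i ∈ Finset.univ.filter (fun i => P i = a),
        ∑ j ∈ Finset.univ.filter (fun j => P j = a), A i j := by
  refine Finset.sum_congr rfl fun a _ => ?_
  simp only [diag_apply, mul_apply, transpose_apply, hX, Finset.sum_mul, Finset.mul_sum,
    ite_mul, mul_ite, zero_mul, mul_zero, Finset.sum_ite, Finset.sum_const_zero, add_zero]
  rw [Finset.sum_comm]
  refine Finset.sum_congr rfl fun i _ => Finset.sum_congr rfl fun j _ => ?_
  ring

end Matrix

theorem modularity_eq_k_sub_one_sub_cut_general {n k : ℕ} (W : Matrix (Fin n) (Fin n) ℝ)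
    (d : Fin n → ℝ)
    (hdpos : ∀ i, 0 < d i) (hvol : ∑ i, d i = 1)
    (P : Fin n → Fin k) (hne : ∀ a : Fin k, ∃ j, P j = a)
    (Vol : Fin k → ℝ)
    (hVol : ∀ a, Vol a = ∑ j ∈ Finset.univ.filter (fun j => P j = a), d j)
    (X : Matrix (Fin n) (Fin k) ℝ)
    (hX : ∀ j a, X j a = if P j = a then 1 / Real.sqrt (Vol a) else 0)
    (Dhalf Mn : Matrix (Fin n) (Fin n) ℝ)
    (hDhalf : Dhalf = Matrix.diagonal (fun i => Real.sqrt (d i)))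
    (hMn : Mn = Matrix.of fun i j => W i j / (Real.sqrt (d i) * Real.sqrt (d j)))
    (M Q : ℝ)
    (hM : M = ∑ a : Fin k, (1 / Vol a) *
      ∑ i ∈ Finset.univ.filter (fun i => P i = a),
        ∑ j ∈ Finset.univ.filter (fun j => P j = a), (W i j - d i * d j))
    (hQ : Q = Matrix.trace ((Dhalf * X)ᵀ * (1 - Mn) * (Dhalf * X))) :
    M = (k : ℝ) - 1 - Q := by
  have hVol_pos : ∀ a, 0 < Vol a := fun a => by
    obtain ⟨j, hj⟩ := hne a
    rw [hVol]
    exact Finset.sum_pos' (fun i _ => (hdpos i).le) ⟨j, by simpa using hj, hdpos j⟩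
  have hQ' : Q = ∑ a, (1 / Vol a) *
      ∑ i ∈ Finset.univ.filter (fun i => P i = a),
        ∑ j ∈ Finset.univ.filter (fun j => P j = a), (diagonal d - W) i j := by
    have hconj : (Dhalf * X)ᵀ * (1 - Mn) * (Dhalf * X) = Xᵀ * (diagonal d - W) * X := by
      rw [← diagonal_sqrt_mul_one_sub_mul_diagonal_sqrt hdpos W, ← hMn, ← hDhalf, transpose_mul,
        hDhalf, diagonal_transpose]
      simp only [Matrix.mul_assoc]
    rw [hQ, hconj, trace_transpose_mul_mul_of_fiber _ P _ X hX]
    simp only [div_pow, one_pow, Real.sq_sqrt (hVol_pos _).le]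
  have hsum_Vol : ∑ a, Vol a = 1 := by
    simp only [hVol, Finset.sum_fiberwise, hvol]
  suffices M + Q = ∑ a, (1 - Vol a) by
    rw [Finset.sum_sub_distrib, hsum_Vol, Finset.sum_const, Finset.card_univ, Fintype.card_fin,
      nsmul_one] at this
    linarith
  rw [hM, hQ', ← Finset.sum_add_distrib]
  refine Finset.sum_congr rfl fun a _ => ?_
  simp only [Matrix.sub_apply, Finset.sum_sub_distrib, sum_sum_diagonal, ← Finset.sum_mul_sum,
    ← hVol]
  field_simp [(hVol_pos a).ne']
  ring

/-- Newman–Girvan modularity and normalized cut: M_k(P_k) = k - 1 - Q_k(P_k). -/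
theorem modularity_eq_k_sub_one_sub_cut {n k : ℕ} (W : Matrix (Fin n) (Fin n) ℝ)
    (hsym : W.IsSymm) (hnn : ∀ i j, 0 ≤ W i j)
    (d : Fin n → ℝ) (hd : ∀ i, d i = ∑ j, W i j)
    (hdpos : ∀ i, 0 < d i) (hvol : ∑ i, d i = 1)
    (P : Fin n → Fin k) (hne : ∀ a : Fin k, ∃ j, P j = a)
    (Vol : Fin k → ℝ)
    (hVol : ∀ a, Vol a = ∑ j ∈ Finset.univ.filter (fun j => P j = a), d j)
    (X : Matrix (Fin n) (Fin k) ℝ)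
    (hX : ∀ j a, X j a = if P j = a then 1 / Real.sqrt (Vol a) else 0)
    (Dhalf Mn : Matrix (Fin n) (Fin n) ℝ)
    (hDhalf : Dhalf = Matrix.diagonal (fun i => Real.sqrt (d i)))
    (hMn : Mn = Matrix.of fun i j => W i j / (Real.sqrt (d i) * Real.sqrt (d j)))
    (M Q : ℝ)
    (hM : M = ∑ a : Fin k, (1 / Vol a) *
      ∑ i ∈ Finset.univ.filter (fun i => P i = a),
        ∑ j ∈ Finset.univ.filter (fun j => P j = a), (W i j - d i * d j))
    (hQ : Q = Matrix.trace ((Dhalf * X)ᵀ * (1 - Mn) * (Dhalf * X))) :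
    M = (k : ℝ) - 1 - Q :=
  modularity_eq_k_sub_one_sub_cut_general W d hdpos hvol P hne Vol hVol X hX Dhalf Mn hDhalf hMn M Q
    hM hQ
end

section
/- The maximum k-way normalized Newman–Girvan modularity of an edge-weighted graph G with Vol(V)=1 is at most the sum of the k−1 largest eigenvalues of the normalized modularity matrix M_D: M_k ≤ ∑_{i=1}^{k-1} λ_i. -/
/-!
Let `y_a = √d ⊙ 1_{V_a} / √Vol(V_a)` be the normalized indicator vectors of the parts. They are
orthonormal, the modularity of the partition is `∑_a y_aᵀ M_D y_a`, and `√d = ∑_a √Vol(V_a) y_a`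
is a unit vector in their span killed by `M_D`. Expanding in the eigenbasis `u_i`, the modularity
equals `∑_i λ_i t_i` with `t_i = ∑_a ⟨u_i, y_a⟩²`, while `0 = ∑_i λ_i s_i` with `s_i = ⟨u_i, √d⟩²`.
The weights `r_i = t_i - s_i` lie in `[0, 1]` (Cauchy–Schwarz and Bessel) and sum to `k - 1`
(Parseval), and such a weighted sum of non-increasing `λ_i` is at most `λ_1 + ⋯ + λ_{k-1}`.
-/

open Matrix BigOperators Finset

section Orthonormal

variable {ι κ : Type*} [Fintype ι] [Fintype κ]

theorem dotProduct_sum_smul_self_of_orthonormal [DecidableEq κ] {y : κ → ι → ℝ}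
    (hy : ∀ a b, y a ⬝ᵥ y b = if a = b then 1 else 0) (c : κ → ℝ) :
    (∑ a, c a • y a) ⬝ᵥ (∑ a, c a • y a) = ∑ a, c a ^ 2 := by
  simp [sum_dotProduct, dotProduct_sum, dotProduct_smul, hy, sq]

theorem sum_sq_dotProduct_le_of_orthonormal [DecidableEq κ] {y : κ → ι → ℝ}
    (hy : ∀ a b, y a ⬝ᵥ y b = if a = b then 1 else 0) (x : ι → ℝ) :
    ∑ a, (y a ⬝ᵥ x) ^ 2 ≤ x ⬝ᵥ x := by
  set p := ∑ a, (y a ⬝ᵥ x) • y a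
  have hpx : p ⬝ᵥ x = ∑ a, (y a ⬝ᵥ x) ^ 2 := by
    simp only [p, sum_dotProduct, smul_dotProduct, smul_eq_mul, sq]
  have hres : 0 ≤ (x - p) ⬝ᵥ (x - p) := sum_nonneg fun i _ => mul_self_nonneg _
  rw [sub_dotProduct, dotProduct_sub, dotProduct_sub, dotProduct_comm x p, hpx,
    dotProduct_sum_smul_self_of_orthonormal hy] at hres
  linarith

variable [DecidableEq ι] {u : ι → ι → ℝ}

theorem eq_sum_dotProduct_smul_of_orthonormal
    (hu : ∀ i j, u i ⬝ᵥ u j = if i = j then 1 else 0) (x : ι → ℝ) :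
    x = ∑ i, (u i ⬝ᵥ x) • u i := by
  have hU : of u * (of u)ᵀ = 1 := by
    ext i j
    simpa [mul_apply, one_apply, dotProduct] using hu i j
  calc x = ((of u)ᵀ * of u) *ᵥ x := by rw [mul_eq_one_comm.mp hU, one_mulVec]
    _ = ∑ i, (u i ⬝ᵥ x) • u i := by rw [← mulVec_mulVec, mulVec_transpose, vecMul_eq_sum]; rfl

theorem dotProduct_mulVec_eq_sum_mul_sq {M : Matrix ι ι ℝ} {lam : ι → ℝ}
    (hlam : ∀ i, M *ᵥ u i = lam i • u i) (hu : ∀ i j, u i ⬝ᵥ u j = if i = j then 1 else 0)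
    (x : ι → ℝ) :
    x ⬝ᵥ M *ᵥ x = ∑ i, lam i * (u i ⬝ᵥ x) ^ 2 := by
  conv_lhs => arg 2; rw [eq_sum_dotProduct_smul_of_orthonormal hu x]
  rw [dotProduct_comm]
  simp only [mulVec_sum, mulVec_smul, hlam, smul_smul, sum_dotProduct, smul_dotProduct,
    smul_eq_mul, sq, mul_comm, mul_left_comm]

theorem dotProduct_self_eq_sum_sq_of_orthonormal (hu : ∀ i j, u i ⬝ᵥ u j = if i = j then 1 else 0)
    (x : ι → ℝ) :
    x ⬝ᵥ x = ∑ i, (u i ⬝ᵥ x) ^ 2 := by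
  simpa using dotProduct_mulVec_eq_sum_mul_sq (M := 1) (lam := 1) (by simp) hu x

end Orthonormal

theorem sum_castLE_eq_sum_ite {M : Type*} [AddCommMonoid M] {m n : ℕ} (h : m ≤ n)
    (f : Fin n → M) :
    ∑ a : Fin m, f (Fin.castLE h a) = ∑ i : Fin n, if (i : ℕ) < m then f i else 0 := by
  have : univ.filter (fun i : Fin n => (i : ℕ) < m) = univ.map (Fin.castLEEmb h) := by
    ext i
    simp only [mem_map, mem_univ, true_and, mem_filter, Fin.castLEEmb_apply]
    exact ⟨fun hi => ⟨⟨i, hi⟩, rfl⟩, fun ⟨a, ha⟩ => ha ▸ a.isLt⟩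
  rw [← sum_filter, this, sum_map]
  rfl

theorem sum_mul_le_sum_castLE_of_antitone {n m : ℕ} (hmn : m ≤ n) {lam : Fin n → ℝ}
    (hlam : Antitone lam) {r : Fin n → ℝ} (hr0 : ∀ i, 0 ≤ r i) (hr1 : ∀ i, r i ≤ 1)
    (hr : ∑ i, r i = m) :
    ∑ i, lam i * r i ≤ ∑ a : Fin m, lam (Fin.castLE hmn a) := by
  set e : Fin n → ℝ := fun i => if (i : ℕ) < m then 1 else 0
  have he : ∑ i, e i = m := by
    simpa [e] using (sum_castLE_eq_sum_ite hmn fun _ => (1 : ℝ)).symm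
  obtain ⟨c, hc⟩ : ∃ c, ∀ i, 0 ≤ (lam i - c) * (e i - r i) := by
    by_cases hm : m < n
    · refine ⟨lam ⟨m, hm⟩, fun i => ?_⟩
      by_cases hi : (i : ℕ) < m
      · have : lam ⟨m, hm⟩ ≤ lam i := hlam (Fin.mk_le_of_le_val hi.le)
        simp only [e, if_pos hi]
        nlinarith [hr1 i]
      · have : lam i ≤ lam ⟨m, hm⟩ := hlam (Fin.le_def.mpr (not_lt.mp hi))
        simp only [e, if_neg hi]
        nlinarith [hr0 i]
    -- when `m = n` every index counts, and any lower bound of `lam` will do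
    · refine ⟨-∑ j, |lam j|, fun i => ?_⟩
      have : -∑ j, |lam j| ≤ lam i :=
        (neg_le_neg (single_le_sum (fun j _ => abs_nonneg (lam j)) (mem_univ i))).trans
          (neg_abs_le _)
      simp only [e, if_pos (i.isLt.trans_le (not_lt.mp hm))]
      nlinarith [hr1 i]
  have hdiff : ∑ a : Fin m, lam (Fin.castLE hmn a) - ∑ i, lam i * r i
      = ∑ i, (lam i - c) * (e i - r i) + c * (∑ i, e i - ∑ i, r i) := by
    rw [sum_castLE_eq_sum_ite, mul_sub, mul_sum, mul_sum, ← sum_sub_distrib, ← sum_sub_distrib,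
      ← sum_add_distrib]
    refine sum_congr rfl fun i _ => ?_
    simp only [e]
    split_ifs <;> ring
  rw [he, hr, sub_self, mul_zero, add_zero] at hdiff
  linarith [sum_nonneg fun i (_ : i ∈ univ) => hc i]

theorem sum_dotProduct_mulVec_le_sum_castLE {n k : ℕ} (hk : 1 ≤ k) (hkn : k - 1 ≤ n)
    {M : Matrix (Fin n) (Fin n) ℝ} {lam : Fin n → ℝ} {u : Fin n → Fin n → ℝ}
    (hlam : ∀ i, M *ᵥ u i = lam i • u i) (hu : ∀ i j, u i ⬝ᵥ u j = if i = j then 1 else 0)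
    (hmono : Antitone lam) {y : Fin k → Fin n → ℝ}
    (hy : ∀ a b, y a ⬝ᵥ y b = if a = b then 1 else 0) {c : Fin k → ℝ}
    (hc : ∑ a, c a ^ 2 = 1) (hMc : M *ᵥ ∑ a, c a • y a = 0) :
    ∑ a, y a ⬝ᵥ M *ᵥ y a ≤ ∑ a : Fin (k - 1), lam (Fin.castLE hkn a) := by
  set z := ∑ a, c a • y a
  set t : Fin n → ℝ := fun i => ∑ a, (u i ⬝ᵥ y a) ^ 2
  set s : Fin n → ℝ := fun i => (u i ⬝ᵥ z) ^ 2
  have hs_le_t : ∀ i, s i ≤ t i := fun i => by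
    calc s i = (∑ a, c a * (u i ⬝ᵥ y a)) ^ 2 := by
          simp only [s, z, dotProduct_sum, dotProduct_smul, smul_eq_mul]
      _ ≤ (∑ a, c a ^ 2) * t i := sum_mul_sq_le_sq_mul_sq _ _ _
      _ = t i := by rw [hc, one_mul]
  have ht_le_one : ∀ i, t i ≤ 1 := fun i => by
    simpa only [t, dotProduct_comm (u i), hu i i, if_true] using
      sum_sq_dotProduct_le_of_orthonormal hy (u i)
  have hsum_t : ∑ i, t i = k := by
    simp only [t]
    rw [sum_comm]
    simp [← dotProduct_self_eq_sum_sq_of_orthonormal hu, hy]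
  have hsum_s : ∑ i, s i = 1 := by
    rw [← dotProduct_self_eq_sum_sq_of_orthonormal hu z,
      dotProduct_sum_smul_self_of_orthonormal hy, hc]
  have hlam_s : ∑ i, lam i * s i = 0 := by
    rw [← dotProduct_mulVec_eq_sum_mul_sq hlam hu z, hMc, dotProduct_zero]
  calc ∑ a, y a ⬝ᵥ M *ᵥ y a = ∑ i, lam i * (t i - s i) := by
        simp only [dotProduct_mulVec_eq_sum_mul_sq hlam hu, mul_sub, sum_sub_distrib, hlam_s,
          sub_zero, t, mul_sum]
        exact sum_comm
    _ ≤ ∑ a : Fin (k - 1), lam (Fin.castLE hkn a) := by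
      refine sum_mul_le_sum_castLE_of_antitone hkn hmono (fun i => sub_nonneg.2 (hs_le_t i))
        (fun i => by linarith [ht_le_one i, sq_nonneg (u i ⬝ᵥ z)]) ?_
      rw [sum_sub_distrib, hsum_t, hsum_s, Nat.cast_sub hk, Nat.cast_one]

section Modularity

variable {ι κ : Type*} [Fintype ι] [DecidableEq κ]

noncomputable def normalizedModularityMatrix (W : Matrix ι ι ℝ) (d : ι → ℝ) : Matrix ι ι ℝ :=
  of (fun i j => W i j / (Real.sqrt (d i) * Real.sqrt (d j)))
    - vecMulVec (fun i => Real.sqrt (d i)) (fun i => Real.sqrt (d i))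

noncomputable def partVol (d : ι → ℝ) (P : ι → κ) (a : κ) : ℝ :=
  ∑ j ∈ univ.filter (fun j => P j = a), d j

noncomputable def normalizedIndicator (d : ι → ℝ) (P : ι → κ) (a : κ) : ι → ℝ :=
  fun i => Real.sqrt (d i) * if P i = a then (Real.sqrt (partVol d P a))⁻¹ else 0

variable {W : Matrix ι ι ℝ} {d : ι → ℝ} {P : ι → κ}

theorem normalizedModularityMatrix_mulVec_sqrt (hW : ∀ i, d i = ∑ j, W i j)
    (hd : ∀ i, 0 < d i) (hvol : ∑ i, d i = 1) :
    normalizedModularityMatrix W d *ᵥ (fun i => Real.sqrt (d i)) = 0 := by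
  ext i
  have hterm : ∀ j, (W i j / (Real.sqrt (d i) * Real.sqrt (d j))
      - Real.sqrt (d i) * Real.sqrt (d j)) * Real.sqrt (d j)
      = W i j / Real.sqrt (d i) - Real.sqrt (d i) * d j := fun j => by
    rw [sub_mul, mul_assoc, Real.mul_self_sqrt (hd j).le, div_mul_eq_mul_div,
      mul_div_mul_right _ _ (Real.sqrt_pos.mpr (hd j)).ne']
  simp only [mulVec, dotProduct, normalizedModularityMatrix, Matrix.sub_apply, of_apply,
    vecMulVec_apply, Pi.zero_apply, hterm]
  rw [sum_sub_distrib, ← sum_div, ← mul_sum, hvol, ← hW, mul_one, Real.div_sqrt, sub_self]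

theorem sqrt_mul_dotProduct_normalizedModularityMatrix_mulVec (hd : ∀ i, 0 < d i)
    (v : ι → ℝ) :
    (fun i => Real.sqrt (d i) * v i) ⬝ᵥ normalizedModularityMatrix W d *ᵥ
      (fun i => Real.sqrt (d i) * v i) = ∑ i, ∑ j, v i * v j * (W i j - d i * d j) := by
  simp only [mulVec, dotProduct, normalizedModularityMatrix, Matrix.sub_apply, of_apply,
    vecMulVec_apply, mul_sum]
  refine sum_congr rfl fun i _ => sum_congr rfl fun j _ => ?_
  have hi0 := (Real.sqrt_pos.mpr (hd i)).ne'
  have hj0 := (Real.sqrt_pos.mpr (hd j)).ne'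
  rw [show d i * d j = Real.sqrt (d i) * Real.sqrt (d j) * (Real.sqrt (d i) * Real.sqrt (d j))
    by rw [mul_mul_mul_comm, Real.mul_self_sqrt (hd i).le, Real.mul_self_sqrt (hd j).le]]
  field_simp

theorem partVol_pos (hd : ∀ i, 0 < d i) {a : κ} (ha : ∃ j, P j = a) : 0 < partVol d P a := by
  obtain ⟨j, hj⟩ := ha
  exact sum_pos' (fun i _ => (hd i).le) ⟨j, mem_filter.mpr ⟨mem_univ j, hj⟩, hd j⟩

theorem partVol_nonneg (hd : ∀ i, 0 ≤ d i) (a : κ) : 0 ≤ partVol d P a :=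
  sum_nonneg fun i _ => hd i

theorem sum_partVol [Fintype κ] : ∑ a, partVol d P a = ∑ i, d i :=
  sum_fiberwise univ P d

theorem normalizedIndicator_orthonormal (hd : ∀ i, 0 ≤ d i) (hV : ∀ a, 0 < partVol d P a)
    (a b : κ) :
    normalizedIndicator d P a ⬝ᵥ normalizedIndicator d P b = if a = b then 1 else 0 := by
  split_ifs with hab
  · subst hab
    calc normalizedIndicator d P a ⬝ᵥ normalizedIndicator d P a
        = ∑ i ∈ univ.filter (fun i => P i = a), d i / partVol d P a := by
          rw [sum_filter]
          refine sum_congr rfl fun i _ => ?_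
          simp only [normalizedIndicator]
          split_ifs
          · rw [mul_mul_mul_comm, Real.mul_self_sqrt (hd i), ← mul_inv,
              Real.mul_self_sqrt (hV a).le, div_eq_mul_inv]
          · simp
      _ = 1 := by rw [← sum_div]; exact div_self (hV a).ne'
  · refine sum_eq_zero fun i _ => ?_
    simp only [normalizedIndicator]
    split_ifs with ha hb
    · exact absurd (ha.symm.trans hb) hab
    all_goals simp

theorem sum_sqrt_partVol_smul_normalizedIndicator [Fintype κ] (hV : ∀ a, 0 < partVol d P a) :
    ∑ a, Real.sqrt (partVol d P a) • normalizedIndicator d P a = fun i => Real.sqrt (d i) := by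
  ext i
  simp only [normalizedIndicator, Finset.sum_apply, Pi.smul_apply, smul_eq_mul, mul_ite,
    mul_zero, sum_ite_eq, mem_univ, if_true]
  rw [mul_left_comm, mul_inv_cancel₀ (Real.sqrt_pos.mpr (hV (P i))).ne', mul_one]

theorem normalizedIndicator_dotProduct_mulVec (hd : ∀ i, 0 < d i) (a : κ) :
    normalizedIndicator d P a ⬝ᵥ normalizedModularityMatrix W d *ᵥ normalizedIndicator d P a
      = 1 / partVol d P a * ∑ i ∈ univ.filter (fun i => P i = a),
          ∑ j ∈ univ.filter (fun j => P j = a), (W i j - d i * d j) := by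
  have hinv : (Real.sqrt (partVol d P a))⁻¹ * (Real.sqrt (partVol d P a))⁻¹
      = 1 / partVol d P a := by
    rw [← mul_inv, Real.mul_self_sqrt (partVol_nonneg (fun i => (hd i).le) a), one_div]
  refine (sqrt_mul_dotProduct_normalizedModularityMatrix_mulVec hd _).trans ?_
  simp only [sum_filter, mul_sum]
  refine sum_congr rfl fun i _ => ?_
  split_ifs with hi
  · simp only [mul_sum]
    refine sum_congr rfl fun j _ => ?_
    split_ifs <;> simp only [← hinv, mul_zero, zero_mul]
  · simp only [zero_mul, sum_const_zero, mul_zero]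

end Modularity

theorem modularity_le_sum_top_eigenvalues_general {n k : ℕ} (hk : 1 ≤ k) (hkn : k - 1 ≤ n)
    (W : Matrix (Fin n) (Fin n) ℝ)
    (d : Fin n → ℝ) (hd : ∀ i, d i = ∑ j, W i j)
    (hdpos : ∀ i, 0 < d i) (hvol : ∑ i, d i = 1)
    (MD : Matrix (Fin n) (Fin n) ℝ)
    (hMD : MD = (Matrix.of fun i j => W i j / (Real.sqrt (d i) * Real.sqrt (d j)))
      - vecMulVec (fun i => Real.sqrt (d i)) (fun i => Real.sqrt (d i)))
    -- eigenvalues of M_D, in non-increasing order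
    (lam : Fin n → ℝ) (u : Fin n → Fin n → ℝ)
    (hlam : ∀ i, MD.mulVec (u i) = lam i • u i)
    (horth : ∀ i j, (u i) ⬝ᵥ (u j) = if i = j then 1 else 0)
    (hmono : ∀ i j : Fin n, i ≤ j → lam j ≤ lam i) :
    ∀ (P : Fin n → Fin k), (∀ a : Fin k, ∃ j, P j = a) →
      (∑ a : Fin k,
        (1 / ∑ j ∈ Finset.univ.filter (fun j => P j = a), d j) *
          ∑ i ∈ Finset.univ.filter (fun i => P i = a),
            ∑ j ∈ Finset.univ.filter (fun j => P j = a), (W i j - d i * d j))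
      ≤ ∑ a : Fin (k - 1), lam (Fin.castLE hkn a) := by
  intro P hP
  change MD = normalizedModularityMatrix W d at hMD
  subst hMD
  have hV : ∀ a, 0 < partVol d P a := fun a => partVol_pos hdpos (hP a)
  refine (sum_congr rfl fun a _ =>
    (normalizedIndicator_dotProduct_mulVec hdpos a).symm).trans_le ?_
  refine sum_dotProduct_mulVec_le_sum_castLE hk hkn hlam horth hmono
    (normalizedIndicator_orthonormal (fun i => (hdpos i).le) hV)
    (c := fun a => Real.sqrt (partVol d P a)) ?_ ?_
  · simp only [Real.sq_sqrt (hV _).le, sum_partVol, hvol]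
  · rw [sum_sqrt_partVol_smul_normalizedIndicator hV]
    exact normalizedModularityMatrix_mulVec_sqrt hd hdpos hvol

/-- The maximum k-way normalized Newman–Girvan modularity is at most the sum of
the k-1 largest eigenvalues of the normalized modularity matrix M_D. -/
theorem modularity_le_sum_top_eigenvalues {n k : ℕ} (hk : 1 ≤ k) (hkn : k - 1 ≤ n)
    (W : Matrix (Fin n) (Fin n) ℝ)
    (hsym : W.IsSymm) (hnn : ∀ i j, 0 ≤ W i j)
    (d : Fin n → ℝ) (hd : ∀ i, d i = ∑ j, W i j)
    (hdpos : ∀ i, 0 < d i) (hvol : ∑ i, d i = 1)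
    (MD : Matrix (Fin n) (Fin n) ℝ)
    (hMD : MD = (Matrix.of fun i j => W i j / (Real.sqrt (d i) * Real.sqrt (d j)))
      - vecMulVec (fun i => Real.sqrt (d i)) (fun i => Real.sqrt (d i)))
    -- eigenvalues of M_D, in non-increasing order
    (lam : Fin n → ℝ) (u : Fin n → Fin n → ℝ)
    (hlam : ∀ i, MD.mulVec (u i) = lam i • u i)
    (horth : ∀ i j, (u i) ⬝ᵥ (u j) = if i = j then 1 else 0)
    (hmono : ∀ i j : Fin n, i ≤ j → lam j ≤ lam i) :
    ∀ (P : Fin n → Fin k), (∀ a : Fin k, ∃ j, P j = a) →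
      (∑ a : Fin k,
        (1 / ∑ j ∈ Finset.univ.filter (fun j => P j = a), d j) *
          ∑ i ∈ Finset.univ.filter (fun i => P i = a),
            ∑ j ∈ Finset.univ.filter (fun j => P j = a), (W i j - d i * d j))
      ≤ ∑ a : Fin (k - 1), lam (Fin.castLE hkn a) :=
  modularity_le_sum_top_eigenvalues_general hk hkn W d hd hdpos hvol MD hMD lam u hlam horth hmono
end

section
/- (Subspace perturbation bound) Let A = ∑_{i=0}^{n-1} μ_i u_i u_iᵀ and B = ∑_{i=0}^{k-1} μ_i v_i v_iᵀ be symmetric matrices with orthonormal systems (u_i) and (v_i), and suppose the eigenvalue sets S_1 = {μ_k,…,μ_{n-1}} of A and S_2 = {μ_0,…,μ_{k-1}} of B are separated with dist(S_1, S_2) = δ > 0. Let P_A = ∑_{j=k}^{n-1} u_j u_jᵀ and P_B = ∑_{i=0}^{k-1} v_i v_iᵀ. Then ‖P_A P_B‖_F ≤ (1/δ)·‖P_A (A − B) P_B‖_F, where ‖·‖_F is the Frobenius norm. -/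
open Matrix BigOperators

/-- Frobenius norm of a square real matrix. -/
noncomputable def frobNorm {n : ℕ} (A : Matrix (Fin n) (Fin n) ℝ) : ℝ :=
  Real.sqrt (∑ i, ∑ j, A i j ^ 2)

/-!
In the rank-one matrices `u_j v_iᵀ`, which are orthonormal for the Frobenius inner product,
`P_A P_B` has coefficients `u_j ⬝ v_i` (for `j ≥ k`), while, since `B P_B = B`,
`P_A (A - B) P_B = P_A A P_B - P_A B` has coefficients `(μ_j - μ_i) (u_j ⬝ v_i)`.
The separation `δ ≤ |μ_j - μ_i|` then compares the two Frobenius norms coefficientwise.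
-/

namespace Matrix

variable {R m n ι κ : Type*} [CommRing R] [Fintype m] [Fintype n] [Fintype ι] [Fintype κ]

theorem sum_smul_vecMulVec_mul_sum_smul_vecMulVec (f : ι → R) (g : κ → R)
    (u : ι → m → R) (v : κ → m → R) :
    (∑ j, f j • vecMulVec (u j) (u j)) * (∑ i, g i • vecMulVec (v i) (v i)) =
      ∑ j, ∑ i, (f j * g i * (u j ⬝ᵥ v i)) • vecMulVec (u j) (v i) := by
  rw [Finset.sum_mul]
  simp only [Finset.mul_sum, smul_mul_smul_comm, vecMulVec_mul_vecMulVec, vecMulVec_smul,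
    smul_smul]

theorem sum_smul_vecMulVec_mul_sum_smul_vecMulVec_self [DecidableEq ι] {u : ι → m → R}
    (hu : ∀ i j, u i ⬝ᵥ u j = if i = j then 1 else 0) (f g : ι → R) :
    (∑ j, f j • vecMulVec (u j) (u j)) * (∑ i, g i • vecMulVec (u i) (u i)) =
      ∑ j, (f j * g j) • vecMulVec (u j) (u j) := by
  rw [sum_smul_vecMulVec_mul_sum_smul_vecMulVec]
  refine Finset.sum_congr rfl fun j _ => ?_
  simp only [hu, mul_ite, mul_one, mul_zero, ite_smul, zero_smul, Finset.sum_ite_eq,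
    Finset.mem_univ, if_true]

theorem sum_mul_apply_sum {α : Type*} (N : Matrix m n R) (s : Finset α)
    (F : α → Matrix m n R) :
    ∑ p, ∑ q, N p q * (∑ t ∈ s, F t) p q = ∑ t ∈ s, ∑ p, ∑ q, N p q * F t p q := by
  simp only [sum_apply, Finset.mul_sum]
  rw [Finset.sum_comm (s := s)]
  exact Finset.sum_congr rfl fun p _ => Finset.sum_comm

theorem sum_mul_apply_vecMulVec (N : Matrix m n R) (a : m → R) (b : n → R) :
    ∑ p, ∑ q, N p q * vecMulVec a b p q = a ⬝ᵥ N *ᵥ b := by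
  simp only [vecMulVec_apply, dotProduct, mulVec, Finset.mul_sum]
  exact Finset.sum_congr rfl fun p _ => Finset.sum_congr rfl fun q _ => by ring

theorem sum_mul_apply_sum_smul_vecMulVec (N : Matrix m n R) (d : ι → κ → R)
    (u : ι → m → R) (v : κ → n → R) :
    ∑ p, ∑ q, N p q * (∑ j, ∑ i, d j i • vecMulVec (u j) (v i)) p q =
      ∑ j, ∑ i, d j i * (u j ⬝ᵥ N *ᵥ v i) := by
  simp only [sum_mul_apply_sum, smul_apply, smul_eq_mul, mul_left_comm _ (d _ _),
    ← Finset.mul_sum, sum_mul_apply_vecMulVec]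

variable [DecidableEq ι] [DecidableEq κ] {u : ι → m → R} {v : κ → n → R}

theorem dotProduct_mulVec_sum_smul_vecMulVec
    (hu : ∀ i j, u i ⬝ᵥ u j = if i = j then 1 else 0)
    (hv : ∀ i j, v i ⬝ᵥ v j = if i = j then 1 else 0) (d : ι → κ → R) (j : ι) (i : κ) :
    u j ⬝ᵥ (∑ j', ∑ i', d j' i' • vecMulVec (u j') (v i')) *ᵥ v i = d j i := by
  simp only [sum_mulVec, smul_mulVec, vecMulVec_mulVec, hv, dotProduct_sum,
    dotProduct_smul, hu]
  simp

theorem sum_sq_apply_sum_smul_vecMulVec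
    (hu : ∀ i j, u i ⬝ᵥ u j = if i = j then 1 else 0)
    (hv : ∀ i j, v i ⬝ᵥ v j = if i = j then 1 else 0) (d : ι → κ → R) :
    ∑ p, ∑ q, (∑ j, ∑ i, d j i • vecMulVec (u j) (v i)) p q ^ 2 = ∑ j, ∑ i, d j i ^ 2 := by
  simp only [sq]
  conv_lhs => rw [sum_mul_apply_sum_smul_vecMulVec]
  simp only [dotProduct_mulVec_sum_smul_vecMulVec hu hv]

end Matrix

theorem Real.sqrt_sum_sum_sq_le_of_mul_abs_le {ι κ : Type*} [Fintype ι] [Fintype κ]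
    {δ : ℝ} (hδ : 0 < δ) {c e : ι → κ → ℝ} (h : ∀ j i, δ * |c j i| ≤ |e j i|) :
    √(∑ j, ∑ i, c j i ^ 2) ≤ 1 / δ * √(∑ j, ∑ i, e j i ^ 2) := by
  rw [one_div, ← div_eq_inv_mul, le_div_iff₀ hδ]
  calc √(∑ j, ∑ i, c j i ^ 2) * δ = √((∑ j, ∑ i, c j i ^ 2) * δ ^ 2) := by
        rw [Real.sqrt_mul' _ (sq_nonneg δ), Real.sqrt_sq hδ.le]
    _ ≤ √(∑ j, ∑ i, e j i ^ 2) := by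
        refine Real.sqrt_le_sqrt ?_
        simp only [Finset.sum_mul]
        refine Finset.sum_le_sum fun j _ => Finset.sum_le_sum fun i _ => ?_
        rw [← mul_pow, sq_le_sq, abs_mul, abs_of_pos hδ, mul_comm]
        exact h j i

/-- Davis–Kahan / Bhatia sin-theta type subspace perturbation bound:
‖P_A P_B‖_F ≤ (1/δ)·‖P_A (A − B) P_B‖_F. -/
theorem subspace_perturbation_bound {n k : ℕ} (hkn : k ≤ n)
    (μ : Fin n → ℝ) (u : Fin n → Fin n → ℝ) (v : Fin k → Fin n → ℝ)
    (huorth : ∀ i j, (u i) ⬝ᵥ (u j) = if i = j then 1 else 0)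
    (hvorth : ∀ i j, (v i) ⬝ᵥ (v j) = if i = j then 1 else 0)
    (δ : ℝ) (hδ : 0 < δ)
    (hsep : ∀ i j : Fin n, (i : ℕ) < k → k ≤ (j : ℕ) → δ ≤ |μ i - μ j|)
    (A B PA PB : Matrix (Fin n) (Fin n) ℝ)
    (hA : A = ∑ i : Fin n, μ i • vecMulVec (u i) (u i))
    (hB : B = ∑ i : Fin k, μ (Fin.castLE hkn i) • vecMulVec (v i) (v i))
    (hPA : PA = ∑ j ∈ Finset.univ.filter (fun j : Fin n => k ≤ (j : ℕ)),
      vecMulVec (u j) (u j))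
    (hPB : PB = ∑ i : Fin k, vecMulVec (v i) (v i)) :
    frobNorm (PA * PB) ≤ (1 / δ) * frobNorm (PA * (A - B) * PB) := by
  have hPA' :
      PA = ∑ j : Fin n, (if k ≤ (j : ℕ) then 1 else 0 : ℝ) • vecMulVec (u j) (u j) := by
    simp only [hPA, Finset.sum_filter, ite_smul, one_smul, zero_smul]
  have hPB' : PB = ∑ i, (1 : ℝ) • vecMulVec (v i) (v i) := by simp only [hPB, one_smul]
  have hBPB : B * PB = B := by
    rw [hB, hPB', sum_smul_vecMulVec_mul_sum_smul_vecMulVec_self hvorth]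
    simp only [mul_one]
  have hcompress : PA * (A - B) * PB = PA * A * PB - PA * B := by
    rw [mul_sub, sub_mul, mul_assoc PA B PB, hBPB]
  rw [frobNorm, frobNorm, hcompress, hPA', hA,
    sum_smul_vecMulVec_mul_sum_smul_vecMulVec_self huorth, hPB', hB,
    sum_smul_vecMulVec_mul_sum_smul_vecMulVec, sum_smul_vecMulVec_mul_sum_smul_vecMulVec,
    sum_smul_vecMulVec_mul_sum_smul_vecMulVec]
  simp only [← Finset.sum_sub_distrib, ← sub_smul, sum_sq_apply_sum_smul_vecMulVec huorth hvorth]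
  refine Real.sqrt_sum_sum_sq_le_of_mul_abs_le hδ fun j i => ?_
  by_cases hj : k ≤ (j : ℕ)
  · simp only [hj, if_true, one_mul, mul_one]
    rw [← sub_mul, abs_mul, abs_sub_comm]
    exact mul_le_mul_of_nonneg_right (hsep _ j i.isLt hj) (abs_nonneg _)
  · simp [hj]
end
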